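/- arXiv:1904.04225 — 6 statements merged into one kernel-verified Lean document; each statement's English description precedes it below -/
import Mathlib

section
/- For every K ≥ 1, α ∈ [0,1), λ ∈ [0,1] and x : Fin K → ℝ, the risk-adjusted value admits the dual representation ρ_λ(x) = min { ∑_{k} θ k · x k | θ : Fin K → ℝ, ∑_{k} θ k = 1, and for all k, λ/K ≤ θ k ≤ λ/K + (1−λ)/(K·(1−α)) }, and the minimum is attained. -/
open Finset

/-- Rockafellar–Uryasev representation of the (lower-tail) conditional value-at-risk
for `K` equally likely scenarios. -/
noncomputable def CVaR (K : ℕ) (α : ℝ) (x : Fin K → ℝ) : ℝ :=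
  sSup {v : ℝ | ∃ a : ℝ, v = a + (1 / (K * (1 - α))) * ∑ k, min (x k - a) 0}

/-- Risk-adjusted expected value: convex combination of expectation and CVaR. -/
noncomputable def riskAdj (K : ℕ) (α lam : ℝ) (x : Fin K → ℝ) : ℝ :=
  lam * ((1 / K) * ∑ k, x k) + (1 - lam) * CVaR K α x

/-! Weights `ψ` with `0 ≤ ψ ≤ s c` and `∑ ψ = s` satisfy `ψ k (x k - a) ≥ s c min (x k - a) 0`
pointwise, which gives weak duality `s (a + c ∑ min (x k - a) 0) ≤ ∑ ψ x` for every `a`.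
Conversely, a minimiser `φ` of `∑ φ x` over the capped simplex `{0 ≤ φ ≤ c, ∑ φ = 1}` (compact and,
for `c ≥ 1/K`, nonempty) satisfies complementary slackness: no mass can move from a larger
scenario to a smaller one. Taking `a` the largest value of `x` on the support of `φ`, every
pointwise inequality becomes an equality, so the Rockafellar–Uryasev supremum is attained at `a`
with value `∑ φ x`. Then `θ = λ/K + (1 - λ) φ` attains the minimum in the dual representation. -/

section CappedSimplex

variable {ι : Type*} [Fintype ι]

def cappedSimplex (c : ℝ) : Set (ι → ℝ) := stdSimplex ℝ ι ∩ Set.Iic (fun _ => c)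

def rockafellarUryasev (c : ℝ) (x : ι → ℝ) (a : ℝ) : ℝ := a + c * ∑ k, min (x k - a) 0

lemma mem_cappedSimplex {c : ℝ} {φ : ι → ℝ} :
    φ ∈ cappedSimplex c ↔ (∀ k, 0 ≤ φ k ∧ φ k ≤ c) ∧ ∑ k, φ k = 1 := by
  simp only [cappedSimplex, stdSimplex, Set.mem_inter_iff, Set.mem_ofPred_eq, Set.mem_Iic,
    Pi.le_def, forall_and]
  tauto

lemma isCompact_cappedSimplex (c : ℝ) : IsCompact (cappedSimplex (ι := ι) c) :=
  (isCompact_stdSimplex ℝ ι).inter_right isClosed_Iic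

lemma cappedSimplex_nonempty {c : ℝ} (hc : 1 ≤ c * Fintype.card ι) :
    (cappedSimplex (ι := ι) c).Nonempty := by
  have hcard : (0 : ℝ) < Fintype.card ι := by
    rcases (Fintype.card ι).eq_zero_or_pos with h | h
    · rw [h, Nat.cast_zero, mul_zero] at hc
      linarith
    · exact_mod_cast h
  refine ⟨fun _ => 1 / Fintype.card ι, mem_cappedSimplex.2 ⟨fun k => ⟨by positivity, ?_⟩, ?_⟩⟩
  · rwa [div_le_iff₀ hcard]
  · simp [Finset.card_univ, hcard.ne']

lemma mul_min_zero_le_mul {C u : ℝ} (t : ℝ) (hu0 : 0 ≤ u) (huC : u ≤ C) :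
    C * min t 0 ≤ u * t := by
  rcases le_or_gt t 0 with ht | ht
  · rw [min_eq_left ht]
    exact mul_le_mul_of_nonpos_right huC ht
  · rw [min_eq_right ht.le, mul_zero]
    positivity

lemma mul_rockafellarUryasev_le_sum_mul {s c : ℝ} {ψ : ι → ℝ} (hψ : ∀ k, 0 ≤ ψ k ∧ ψ k ≤ s * c)
    (hsum : ∑ k, ψ k = s) (x : ι → ℝ) (a : ℝ) :
    s * rockafellarUryasev c x a ≤ ∑ k, ψ k * x k :=
  calc s * rockafellarUryasev c x a = s * a + ∑ k, s * c * min (x k - a) 0 := by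
        simp only [rockafellarUryasev, ← mul_sum]; ring
    _ ≤ s * a + ∑ k, ψ k * (x k - a) := by
        gcongr s * a + ?_
        exact sum_le_sum fun k _ => mul_min_zero_le_mul _ (hψ k).1 (hψ k).2
    _ = ∑ k, ψ k * x k := by simp [mul_sub, sum_sub_distrib, ← sum_mul, hsum]

lemma eq_or_eq_zero_of_isMinOn_cappedSimplex {c : ℝ} {x φ : ι → ℝ} (hφ : φ ∈ cappedSimplex c)
    (hmin : IsMinOn (fun ψ => ∑ k, ψ k * x k) (cappedSimplex c) φ) {i j : ι}
    (hij : x i < x j) : φ i = c ∨ φ j = 0 := by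
  classical
  by_contra! h
  obtain ⟨hφb, hφsum⟩ := mem_cappedSimplex.1 hφ
  have hne : i ≠ j := by rintro rfl; exact lt_irrefl _ hij
  set ε := min (c - φ i) (φ j)
  have hε : 0 < ε :=
    lt_min (sub_pos.2 (lt_of_le_of_ne (hφb i).2 h.1)) (lt_of_le_of_ne (hφb j).1 h.2.symm)
  have hεi : ε ≤ c - φ i := min_le_left _ _
  have hεj : ε ≤ φ j := min_le_right _ _
  -- move mass `ε` from `j` to `i`: this stays feasible and lowers the objective by `ε (x j - x i)`
  set φ' : ι → ℝ := fun k => φ k + ε * ((Pi.single i 1 : ι → ℝ) k - (Pi.single j 1 : ι → ℝ) k)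
  have hφ' : φ' ∈ cappedSimplex c := by
    refine mem_cappedSimplex.2 ⟨fun k => ?_, ?_⟩
    · simp only [φ', Pi.single_apply]
      split_ifs with hki hkj hkj
      · exact absurd (hki.symm.trans hkj) hne
      all_goals subst_vars; constructor <;> linarith [hφb k]
    · simp [φ', sum_add_distrib, ← mul_sum, hφsum]
  have hobj : ∑ k, φ' k * x k = ∑ k, φ k * x k - ε * (x j - x i) := by
    simp only [φ', Pi.single_apply, mul_sub, mul_ite, mul_one, mul_zero, add_mul, sub_mul, ite_mul,
      zero_mul, sum_add_distrib, sum_sub_distrib, sum_ite_eq', mem_univ, ↓reduceIte]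
    ring
  have hle : ∑ k, φ k * x k ≤ ∑ k, φ' k * x k := hmin hφ'
  linarith [mul_pos hε (sub_pos.2 hij)]

lemma exists_threshold_of_slackness {c : ℝ} {x φ : ι → ℝ} (hφsum : ∑ k, φ k = 1)
    (hslack : ∀ i j, x i < x j → φ i = c ∨ φ j = 0) :
    ∃ a, ∀ k, φ k * (x k - a) = c * min (x k - a) 0 := by
  obtain ⟨j₀, -, hj₀⟩ := exists_ne_zero_of_sum_ne_zero (hφsum ▸ one_ne_zero : ∑ k, φ k ≠ 0)
  obtain ⟨j, hj, hjmax⟩ :=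
    exists_max_image (univ.filter fun k => φ k ≠ 0) x ⟨j₀, by simpa using hj₀⟩
  rw [mem_filter] at hj
  refine ⟨x j, fun k => ?_⟩
  rcases lt_trichotomy (x k) (x j) with hlt | heq | hgt
  · rw [(hslack k j hlt).resolve_right hj.2, min_eq_left (by linarith)]
  · simp [heq]
  · have hk : φ k = 0 := by
      by_contra hk
      exact (hjmax k (by simpa using hk)).not_gt hgt
    rw [hk, min_eq_right (by linarith)]
    ring

theorem exists_isGreatest_range_rockafellarUryasev {c : ℝ} (hc : 1 ≤ c * Fintype.card ι)
    (x : ι → ℝ) :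
    ∃ φ ∈ cappedSimplex c, IsGreatest (Set.range (rockafellarUryasev c x)) (∑ k, φ k * x k) := by
  obtain ⟨φ, hφ, hmin⟩ := (isCompact_cappedSimplex c).exists_isMinOn
    (cappedSimplex_nonempty hc)
    (by fun_prop : Continuous fun ψ : ι → ℝ => ∑ k, ψ k * x k).continuousOn
  obtain ⟨hφb, hφsum⟩ := mem_cappedSimplex.1 hφ
  obtain ⟨a, ha⟩ := exists_threshold_of_slackness hφsum
    fun i j => eq_or_eq_zero_of_isMinOn_cappedSimplex hφ hmin
  refine ⟨φ, hφ, ⟨a, ?_⟩, ?_⟩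
  · simp only [rockafellarUryasev, mul_sum, ← ha]
    simp [mul_sub, sum_sub_distrib, ← sum_mul, hφsum]
  · rintro _ ⟨a', rfl⟩
    simpa using mul_rockafellarUryasev_le_sum_mul (s := 1) (by simpa using hφb) hφsum x a'

end CappedSimplex

lemma CVaR_eq_sSup_range_rockafellarUryasev (K : ℕ) (α : ℝ) (x : Fin K → ℝ) :
    CVaR K α x = sSup (Set.range (rockafellarUryasev (1 / (K * (1 - α))) x)) := by
  unfold CVaR
  congr 1
  ext v
  exact exists_congr fun a => eq_comm

theorem exists_isGreatest_CVaR {K : ℕ} (hK : 1 ≤ K) {α : ℝ} (hα0 : 0 ≤ α) (hα1 : α < 1)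
    (x : Fin K → ℝ) :
    ∃ φ ∈ cappedSimplex (1 / (K * (1 - α))),
      IsGreatest (Set.range (rockafellarUryasev (1 / (K * (1 - α))) x)) (CVaR K α x) ∧
        CVaR K α x = ∑ k, φ k * x k := by
  have hc : 1 ≤ 1 / (K * (1 - α)) * Fintype.card (Fin K) := by
    have hK0 : (1 : ℝ) ≤ K := by exact_mod_cast hK
    rw [Fintype.card_fin, div_mul_eq_mul_div, one_mul, le_div_iff₀ (by nlinarith)]
    nlinarith
  obtain ⟨φ, hφ, hmax⟩ := exists_isGreatest_range_rockafellarUryasev hc x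
  rw [CVaR_eq_sSup_range_rockafellarUryasev, hmax.csSup_eq]
  exact ⟨φ, hφ, hmax, rfl⟩

theorem riskAdj_dual_representation_general (K : ℕ) (hK : 1 ≤ K) (α : ℝ) (hα0 : 0 ≤ α) (hα1 : α < 1)
    (lam : ℝ) (hlam1 : lam ≤ 1) (x : Fin K → ℝ) :
    IsLeast
      {v : ℝ | ∃ θ : Fin K → ℝ, (∑ k, θ k) = 1 ∧
        (∀ k, lam / K ≤ θ k ∧ θ k ≤ lam / K + (1 - lam) / (K * (1 - α))) ∧
        v = ∑ k, θ k * x k}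
      (riskAdj K α lam x) := by
  obtain ⟨φ, hφ, ⟨⟨a, ha⟩, -⟩, hCVaR⟩ := exists_isGreatest_CVaR hK hα0 hα1 x
  obtain ⟨hφb, hφsum⟩ := mem_cappedSimplex.1 hφ
  have hKlam : (K : ℝ) * (lam / K) = lam := mul_div_cancel₀ lam (by positivity)
  have hcap : (1 - lam) / (K * (1 - α)) = (1 - lam) * (1 / (K * (1 - α))) := by ring
  have hmean : lam * ((1 / K) * ∑ k, x k) = ∑ k, lam / K * x k := by rw [← mul_sum]; ring
  refine ⟨⟨fun k => lam / K + (1 - lam) * φ k, ?_, fun k => ⟨?_, ?_⟩, ?_⟩, ?_⟩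
  · simp [sum_add_distrib, ← mul_sum, hφsum, hKlam]
  · exact le_add_of_nonneg_right (mul_nonneg (sub_nonneg.2 hlam1) (hφb k).1)
  · rw [hcap]
    exact add_le_add_right (mul_le_mul_of_nonneg_left (hφb k).2 (sub_nonneg.2 hlam1)) _
  · simp only [riskAdj, hCVaR, hmean, add_mul, sum_add_distrib, mul_assoc, ← mul_sum]
  · rintro _ ⟨θ, hθsum, hθ, rfl⟩
    have hψ := mul_rockafellarUryasev_le_sum_mul (s := 1 - lam)
      (c := 1 / (K * (1 - α))) (ψ := fun k => θ k - lam / K)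
      (fun k => ⟨by linarith [hθ k], by linarith [hθ k]⟩)
      (by simp [sum_sub_distrib, hθsum, hKlam]) x a
    simp only [sub_mul, sum_sub_distrib] at hψ
    rw [riskAdj, ← ha, hmean]
    linarith

/-- Dual representation of the risk-adjusted value: `ρ_λ(x)` is the attained minimum of
`∑ₖ θ k · x k` over weights `θ` summing to one with
`λ/K ≤ θ k ≤ λ/K + (1−λ)/(K·(1−α))` for every scenario `k`. -/
theorem riskAdj_dual_representation (K : ℕ) (hK : 1 ≤ K) (α : ℝ) (hα0 : 0 ≤ α) (hα1 : α < 1)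
    (lam : ℝ) (hlam0 : 0 ≤ lam) (hlam1 : lam ≤ 1) (x : Fin K → ℝ) :
    IsLeast
      {v : ℝ | ∃ θ : Fin K → ℝ, (∑ k, θ k) = 1 ∧
        (∀ k, lam / K ≤ θ k ∧ θ k ≤ lam / K + (1 - lam) / (K * (1 - α))) ∧
        v = ∑ k, θ k * x k}
      (riskAdj K α lam x) :=
  riskAdj_dual_representation_general K hK α hα0 hα1 lam hlam1 x
end

section
/- Suppose q⁰ ≥ 0 maximizes the total welfare W(q) = ρ_{λg}(fun k => (g k − q)·π k) + ρ_{λd}(fun k => (q − d k)·π k) over q ≥ 0. Then there exists a contract price p⁰ ∈ ℝ such that (p⁰, q⁰) is a competitive equilibrium: q⁰ maximizes ρ_{λg}(fun k => (g k − q)·π k) + q·p⁰ over q ≥ 0 and q⁰ maximizes ρ_{λd}(fun k => (q − d k)·π k) − q·p⁰ over q ≥ 0. (p⁰ is the dual multiplier of the market-clearing constraint q_s = q_b in the welfare LP.) -/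
/-!
Both risk-adjusted payoffs are concave in the contract quantity: CVaR is the supremum over `a`
of the Rockafellar–Uryasev objective, which is jointly concave in the payoff vector and `a`, and
`riskAdj` adds a linear term. For concave `f`, `g` on a convex set of reals with `f + g` maximal
at `x₀`, a price `p` decouples the two problems as soon as it lies above the right secant slopes
of `g` at `x₀` and the left ones of `-f`, and below the left ones of `g` and the right ones of `-f`.
Such a `p` exists because secant slopes of concave functions are antitone and the optimality of
`x₀` makes the sum of the secant slopes of `f` and `g` nonpositive to the right of `x₀` and
nonnegative to its left.
-/


open Finset

open Set

noncomputable def cvarObjective (K : ℕ) (α : ℝ) (x : Fin K → ℝ) (a : ℝ) : ℝ :=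
  a + (1 / (K * (1 - α))) * ∑ k, min (x k - a) 0

section CVaR

variable {K : ℕ} {α : ℝ}

theorem CVaR_eq_iSup (x : Fin K → ℝ) : CVaR K α x = ⨆ a, cvarObjective K α x a := by
  rw [CVaR, iSup]
  congr 1
  ext v
  simp [cvarObjective, eq_comm]

theorem cvarObjective_le_mean (hK : K ≠ 0) (hα0 : 0 ≤ α) (hα1 : α < 1) (x : Fin K → ℝ) (a : ℝ) :
    cvarObjective K α x a ≤ (1 / K) * ∑ k, x k := by
  have hmin : ∀ t : ℝ, min t 0 ≤ (1 - α) * t := fun t => by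
    rcases le_total t 0 with ht | ht
    · rw [min_eq_left ht]; nlinarith
    · rw [min_eq_right ht]; nlinarith
  have hα : 0 < 1 - α := by linarith
  have hK' : (0 : ℝ) < K := by positivity
  calc cvarObjective K α x a
      ≤ a + (1 / (K * (1 - α))) * ∑ k, (1 - α) * (x k - a) := by
        unfold cvarObjective
        gcongr with k
        exact hmin _
    _ = (1 / K) * ∑ k, x k := by
        rw [← mul_sum, sum_sub_distrib, sum_const, card_univ, Fintype.card_fin, nsmul_eq_mul]
        field_simp
        ring

theorem bddAbove_range_cvarObjective (hK : K ≠ 0) (hα0 : 0 ≤ α) (hα1 : α < 1)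
    (x : Fin K → ℝ) : BddAbove (range (cvarObjective K α x)) :=
  ⟨_, forall_mem_range.2 (cvarObjective_le_mean hK hα0 hα1 x)⟩

theorem concaveOn_cvarObjective (hα : α ≤ 1) :
    ConcaveOn ℝ univ fun p : (Fin K → ℝ) × ℝ => cvarObjective K α p.1 p.2 := by
  refine ⟨convex_univ, ?_⟩
  rintro ⟨x, u⟩ - ⟨y, v⟩ - a b ha hb hab
  have hmin := ((concaveOn_id (𝕜 := ℝ) (convex_univ (E := ℝ))).inf
    (concaveOn_const (0 : ℝ) convex_univ)).2
  have hsum : a * ∑ k, min (x k - u) 0 + b * ∑ k, min (y k - v) 0 ≤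
      ∑ k, min ((a * x k + b * y k) - (a * u + b * v)) 0 := by
    rw [mul_sum, mul_sum, ← sum_add_distrib]
    gcongr with k
    have := hmin (mem_univ (x k - u)) (mem_univ (y k - v)) ha hb hab
    simp only [smul_eq_mul, Pi.inf_apply, id] at this
    rwa [show a * x k + b * y k - (a * u + b * v) = a * (x k - u) + b * (y k - v) by ring]
  have hc : 0 ≤ 1 / (K * (1 - α)) := by
    have : (0 : ℝ) ≤ 1 - α := by linarith
    positivity
  simp only [cvarObjective, smul_eq_mul, Prod.smul_mk, Prod.mk_add_mk, Pi.add_apply,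
    Pi.smul_apply]
  linear_combination mul_le_mul_of_nonneg_left hsum hc

theorem concaveOn_CVaR (hK : K ≠ 0) (hα0 : 0 ≤ α) (hα1 : α < 1) :
    ConcaveOn ℝ univ (CVaR K α) := by
  refine ⟨convex_univ, fun x _ y _ a b ha hb hab => ?_⟩
  simp only [smul_eq_mul, CVaR_eq_iSup]
  rw [Real.mul_iSup_of_nonneg ha, Real.mul_iSup_of_nonneg hb, ← le_sub_iff_add_le]
  refine ciSup_le fun u => ?_
  rw [le_sub_comm]
  refine ciSup_le fun v => ?_
  rw [le_sub_iff_add_le']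
  have h := (concaveOn_cvarObjective hα1.le).2 (mem_univ (x, u)) (mem_univ (y, v)) ha hb hab
  simp only [smul_eq_mul, Prod.smul_mk, Prod.mk_add_mk] at h
  exact h.trans (le_ciSup (bddAbove_range_cvarObjective hK hα0 hα1 _) _)

theorem concaveOn_riskAdj (hK : K ≠ 0) (hα0 : 0 ≤ α) (hα1 : α < 1) {lam : ℝ} (hlam : lam ≤ 1) :
    ConcaveOn ℝ univ (riskAdj K α lam) := by
  refine ⟨convex_univ, fun x _ y _ a b ha hb hab => ?_⟩
  have h := (concaveOn_CVaR hK hα0 hα1).2 (mem_univ x) (mem_univ y) ha hb hab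
  simp only [riskAdj, smul_eq_mul, Pi.add_apply, Pi.smul_apply, sum_add_distrib, ← mul_sum] at h ⊢
  linear_combination mul_le_mul_of_nonneg_left h (sub_nonneg.2 hlam)

end CVaR

theorem ConcaveOn.comp_add_smul {𝕜 E β : Type*} [Field 𝕜] [LinearOrder 𝕜] [IsStrictOrderedRing 𝕜]
    [AddCommGroup E] [Module 𝕜 E] [AddCommMonoid β] [PartialOrder β] [IsOrderedAddMonoid β]
    [SMul 𝕜 β] {f : E → β} (hf : ConcaveOn 𝕜 univ f) (u v : E) :
    ConcaveOn 𝕜 univ fun t : 𝕜 => f (u + t • v) := by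
  have h := (hf.translate_right u).comp_linearMap (LinearMap.toSpanSingleton 𝕜 E v)
  simp only [preimage_univ, Function.comp_def, LinearMap.toSpanSingleton_apply] at h
  exact h

theorem sub_le_mul_sub_of_slope {f : ℝ → ℝ} {x₀ x c : ℝ} (hright : x₀ < x → slope f x₀ x ≤ c)
    (hleft : x < x₀ → c ≤ slope f x₀ x) : f x - f x₀ ≤ c * (x - x₀) := by
  rcases lt_trichotomy x x₀ with hlt | rfl | hgt
  · have := hleft hlt
    rwa [slope_def_field, le_div_iff_of_neg (sub_neg.2 hlt)] at this
  · simp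
  · have := hright hgt
    rwa [slope_def_field, div_le_iff₀ (sub_pos.2 hgt)] at this

theorem ConcaveOn.exists_between_slopes {s : Set ℝ} {f g : ℝ → ℝ} (hf : ConcaveOn ℝ s f)
    (hg : ConcaveOn ℝ s g) {x₀ : ℝ} (hx₀ : x₀ ∈ s)
    (hright : ∀ x ∈ s, x₀ < x → slope f x₀ x + slope g x₀ x ≤ 0)
    (hleft : ∀ x ∈ s, x < x₀ → 0 ≤ slope f x₀ x + slope g x₀ x) :
    ∃ p, ∀ x ∈ s, (x₀ < x → slope g x₀ x ≤ p ∧ p ≤ -slope f x₀ x) ∧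
      (x < x₀ → -slope f x₀ x ≤ p ∧ p ≤ slope g x₀ x) := by
  by_cases hs : ∃ x ∈ s, x ≠ x₀
  swap
  · push Not at hs
    exact ⟨0, fun x hx => ⟨fun h => absurd (hs x hx) h.ne', fun h => absurd (hs x hx) h.ne⟩⟩
  set σf := slope f x₀
  set σg := slope g x₀
  have antiF := hf.slope_anti hx₀
  have antiG := hg.slope_anti hx₀
  set A := σg '' {x ∈ s | x₀ < x} ∪ (fun x => -σf x) '' {x ∈ s | x < x₀}
  set B := (fun x => -σf x) '' {x ∈ s | x₀ < x} ∪ σg '' {x ∈ s | x < x₀}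
  obtain ⟨x₁, hx₁, hne⟩ := hs
  obtain ⟨hA, hB⟩ : A.Nonempty ∧ B.Nonempty := by
    rcases hne.lt_or_gt with h | h
    · exact ⟨⟨_, Or.inr (mem_image_of_mem _ ⟨hx₁, h⟩)⟩, ⟨_, Or.inr (mem_image_of_mem _ ⟨hx₁, h⟩)⟩⟩
    · exact ⟨⟨_, Or.inl (mem_image_of_mem _ ⟨hx₁, h⟩)⟩, ⟨_, Or.inl (mem_image_of_mem _ ⟨hx₁, h⟩)⟩⟩
  have hAB : ∀ a ∈ A, ∀ b ∈ B, a ≤ b := by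
    rintro _ (⟨x, ⟨hx, hxr⟩, rfl⟩ | ⟨x, ⟨hx, hxl⟩, rfl⟩)
      _ (⟨y, ⟨hy, hyr⟩, rfl⟩ | ⟨y, ⟨hy, hyl⟩, rfl⟩)
    · rcases le_total x y with h | h
      · linarith [antiF ⟨hx, hxr.ne'⟩ ⟨hy, hyr.ne'⟩ h, hright x hx hxr]
      · linarith [antiG ⟨hy, hyr.ne'⟩ ⟨hx, hxr.ne'⟩ h, hright y hy hyr]
    · exact antiG ⟨hy, hyl.ne⟩ ⟨hx, hxr.ne'⟩ (hyl.trans hxr).le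
    · exact neg_le_neg (antiF ⟨hx, hxl.ne⟩ ⟨hy, hyr.ne'⟩ (hxl.trans hyr).le)
    · rcases le_total x y with h | h
      · linarith [antiF ⟨hx, hxl.ne⟩ ⟨hy, hyl.ne⟩ h, hleft y hy hyl]
      · linarith [antiG ⟨hy, hyl.ne⟩ ⟨hx, hxl.ne⟩ h, hleft x hx hxl]
  obtain ⟨p, hpA, hpB⟩ := exists_between_of_forall_le hA hB hAB
  refine ⟨p, fun x hx => ⟨fun h => ⟨?_, ?_⟩, fun h => ⟨?_, ?_⟩⟩⟩
  · exact hpA (Or.inl (mem_image_of_mem _ ⟨hx, h⟩))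
  · exact hpB (Or.inl (mem_image_of_mem _ ⟨hx, h⟩))
  · exact hpA (Or.inr (mem_image_of_mem _ ⟨hx, h⟩))
  · exact hpB (Or.inr (mem_image_of_mem _ ⟨hx, h⟩))

theorem ConcaveOn.exists_isMaxOn_add_mul_of_isMaxOn_add {s : Set ℝ} {f g : ℝ → ℝ}
    (hf : ConcaveOn ℝ s f) (hg : ConcaveOn ℝ s g) {x₀ : ℝ} (hx₀ : x₀ ∈ s)
    (hmax : IsMaxOn (f + g) s x₀) :
    ∃ p, IsMaxOn (fun x => f x + x * p) s x₀ ∧ IsMaxOn (fun x => g x - x * p) s x₀ := by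
  simp only [isMaxOn_iff, Pi.add_apply] at hmax
  have hright : ∀ x ∈ s, x₀ < x → slope f x₀ x + slope g x₀ x ≤ 0 := fun x hx h => by
    rw [slope_def_field, slope_def_field, ← add_div]
    exact div_nonpos_of_nonpos_of_nonneg (by linarith [hmax x hx]) (sub_nonneg.2 h.le)
  have hleft : ∀ x ∈ s, x < x₀ → 0 ≤ slope f x₀ x + slope g x₀ x := fun x hx h => by
    rw [slope_def_field, slope_def_field, ← add_div]
    exact div_nonneg_of_nonpos (by linarith [hmax x hx]) (sub_nonpos.2 h.le)
  obtain ⟨p, hp⟩ := hf.exists_between_slopes hg hx₀ hright hleft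
  refine ⟨p, isMaxOn_iff.2 fun x hx => ?_, isMaxOn_iff.2 fun x hx => ?_⟩
  · have := sub_le_mul_sub_of_slope (f := f) (c := -p)
      (fun h => le_neg_of_le_neg ((hp x hx).1 h).2) (fun h => neg_le.1 ((hp x hx).2 h).1)
    linarith
  · have := sub_le_mul_sub_of_slope (f := g) (c := p)
      (fun h => ((hp x hx).1 h).1) (fun h => ((hp x hx).2 h).2)
    linarith

/-- Welfare maximum implies equilibrium: if `q⁰ ≥ 0` maximizes total welfare over `q ≥ 0`,
then there exists a contract price `p⁰` (the dual multiplier of the market-clearing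
constraint in the welfare LP) such that `(p⁰, q⁰)` is a competitive equilibrium. -/
theorem welfare_maximum_yields_equilibrium_price (K : ℕ) (hK : 1 ≤ K)
    (α : ℝ) (hα0 : 0 ≤ α) (hα1 : α < 1)
    (lamg lamd : ℝ) (hlamg : 0 ≤ lamg ∧ lamg ≤ 1) (hlamd : 0 ≤ lamd ∧ lamd ≤ 1)
    (g d π : Fin K → ℝ) (q₀ : ℝ) (hq₀ : 0 ≤ q₀)
    (hwelf : ∀ q : ℝ, 0 ≤ q →
      riskAdj K α lamg (fun k => (g k - q) * π k) +
          riskAdj K α lamd (fun k => (q - d k) * π k) ≤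
        riskAdj K α lamg (fun k => (g k - q₀) * π k) +
          riskAdj K α lamd (fun k => (q₀ - d k) * π k)) :
    ∃ p₀ : ℝ,
      (∀ q : ℝ, 0 ≤ q →
        riskAdj K α lamg (fun k => (g k - q) * π k) + q * p₀ ≤
          riskAdj K α lamg (fun k => (g k - q₀) * π k) + q₀ * p₀) ∧
      (∀ q : ℝ, 0 ≤ q →
        riskAdj K α lamd (fun k => (q - d k) * π k) - q * p₀ ≤
          riskAdj K α lamd (fun k => (q₀ - d k) * π k) - q₀ * p₀) := by
  have hK0 : K ≠ 0 := Nat.one_le_iff_ne_zero.mp hK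
  have position : ∀ lam ≤ 1, ∀ u v : Fin K → ℝ,
      ConcaveOn ℝ (Ici (0 : ℝ)) fun q => riskAdj K α lam (u + q • v) := fun lam hlam u v =>
    ((concaveOn_riskAdj hK0 hα0 hα1 hlam).comp_add_smul u v).subset (subset_univ _) (convex_Ici 0)
  have hgen : ConcaveOn ℝ (Ici (0 : ℝ)) fun q => riskAdj K α lamg (fun k => (g k - q) * π k) :=
    (position lamg hlamg.2 (g * π) (-π)).congr fun q _ => congrArg _ <| funext fun k => by
      simp only [Pi.add_apply, Pi.neg_apply, Pi.mul_apply, Pi.smul_apply, smul_eq_mul]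
      ring
  have hload : ConcaveOn ℝ (Ici (0 : ℝ)) fun q => riskAdj K α lamd (fun k => (q - d k) * π k) :=
    (position lamd hlamd.2 (-(d * π)) π).congr fun q _ => congrArg _ <| funext fun k => by
      simp only [Pi.add_apply, Pi.neg_apply, Pi.mul_apply, Pi.smul_apply, smul_eq_mul]
      ring
  exact hgen.exists_isMaxOn_add_mul_of_isMaxOn_add hload hq₀ hwelf
end

section
/- Suppose the generator is risk neutral, λg = 1, and (p⁰, q⁰) is a competitive equilibrium with q⁰ > 0: q⁰ maximizes ρ_{1}(fun k => (g k − q)·π k) + q·p⁰ = (1/K)·∑_{k} (g k − q)·π k + q·p⁰ over q ≥ 0 and q⁰ maximizes ρ_{λd}(fun k => (q − d k)·π k) − q·p⁰ over q ≥ 0 for some λd ∈ [0,1]. Then the equilibrium contract price equals the average spot price: p⁰ = (1/K)·∑_{k} π k. -/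
open Finset

/-! A risk-neutral generator's objective is affine in the contract quantity `q`, with slope
`p₀ - (1/K) ∑ π k`; an affine function maximized over `q ≥ 0` at an interior point has slope
zero. -/

theorem riskAdj_one (K : ℕ) (α : ℝ) (x : Fin K → ℝ) :
    riskAdj K α 1 x = (1 / K) * ∑ k, x k := by
  simp [riskAdj]

theorem average_sub_mul_eq (K : ℕ) (g π : Fin K → ℝ) (q : ℝ) :
    (1 / K : ℝ) * ∑ k, (g k - q) * π k =
      (1 / K) * ∑ k, g k * π k - q * ((1 / K) * ∑ k, π k) := by
  simp only [sub_mul, sum_sub_distrib, ← mul_sum]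
  ring

theorem eq_zero_of_forall_nonneg_mul_le {s q₀ : ℝ} (hq₀ : 0 < q₀)
    (h : ∀ q : ℝ, 0 ≤ q → q * s ≤ q₀ * s) : s = 0 := by
  have at_zero := h 0 le_rfl
  have at_double := h (2 * q₀) (by positivity)
  nlinarith

theorem risk_neutral_generator_price_eq_average_spot_general (K : ℕ)
    (α : ℝ)
    (g π : Fin K → ℝ) (p₀ q₀ : ℝ) (hq₀ : 0 < q₀)
    (hgen : ∀ q : ℝ, 0 ≤ q →
      riskAdj K α 1 (fun k => (g k - q) * π k) + q * p₀ ≤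
        riskAdj K α 1 (fun k => (g k - q₀) * π k) + q₀ * p₀) :
    p₀ = (1 / K) * ∑ k, π k := by
  refine sub_eq_zero.mp (eq_zero_of_forall_nonneg_mul_le hq₀ fun q hq => ?_)
  have hq := hgen q hq
  simp only [riskAdj_one, average_sub_mul_eq] at hq
  linarith

/-- If the generator is risk neutral (`λg = 1`), any competitive equilibrium with `q⁰ > 0`
has contract price equal to the average spot price. -/
theorem risk_neutral_generator_price_eq_average_spot (K : ℕ) (hK : 1 ≤ K)
    (α : ℝ) (hα0 : 0 ≤ α) (hα1 : α < 1)
    (lamd : ℝ) (hlamd : 0 ≤ lamd ∧ lamd ≤ 1)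
    (g d π : Fin K → ℝ) (p₀ q₀ : ℝ) (hq₀ : 0 < q₀)
    (hgen : ∀ q : ℝ, 0 ≤ q →
      riskAdj K α 1 (fun k => (g k - q) * π k) + q * p₀ ≤
        riskAdj K α 1 (fun k => (g k - q₀) * π k) + q₀ * p₀)
    (hload : ∀ q : ℝ, 0 ≤ q →
      riskAdj K α lamd (fun k => (q - d k) * π k) - q * p₀ ≤
        riskAdj K α lamd (fun k => (q₀ - d k) * π k) - q₀ * p₀) :
    p₀ = (1 / K) * ∑ k, π k :=
  risk_neutral_generator_price_eq_average_spot_general K α g π p₀ q₀ hq₀ hgen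
end

section
/- Suppose the load is risk neutral, λd = 1, and (p⁰, q⁰) is a competitive equilibrium with q⁰ > 0: q⁰ maximizes ρ_{λg}(fun k => (g k − q)·π k) + q·p⁰ over q ≥ 0 for some λg ∈ [0,1], and q⁰ maximizes ρ_{1}(fun k => (q − d k)·π k) − q·p⁰ = (1/K)·∑_{k} (q − d k)·π k − q·p⁰ over q ≥ 0. Then the equilibrium contract price equals the average spot price: p⁰ = (1/K)·∑_{k} π k. -/
open Finset

theorem mean_sub_mul_eq {K : ℕ} (q : ℝ) (d π : Fin K → ℝ) :
    (1 / K) * ∑ k, (q - d k) * π k = q * ((1 / K) * ∑ k, π k) - (1 / K) * ∑ k, d k * π k := by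
  simp only [sub_mul, sum_sub_distrib, ← mul_sum]
  ring

theorem eq_zero_of_forall_nonneg_mul_le_mul {s q₀ : ℝ} (hq₀ : 0 < q₀)
    (h : ∀ q : ℝ, 0 ≤ q → s * q ≤ s * q₀) : s = 0 := by
  have hs_nonneg : 0 ≤ s := nonneg_of_mul_nonneg_left (by simpa using h 0 le_rfl) hq₀
  have hs_nonpos : s * q₀ ≤ 0 := by linarith [h (2 * q₀) (by positivity)]
  exact le_antisymm (nonpos_of_mul_nonpos_left hs_nonpos hq₀) hs_nonneg

theorem risk_neutral_load_price_eq_average_spot_general (K : ℕ)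
    (α : ℝ)
    (d π : Fin K → ℝ) (p₀ q₀ : ℝ) (hq₀ : 0 < q₀)
    (hload : ∀ q : ℝ, 0 ≤ q →
      riskAdj K α 1 (fun k => (q - d k) * π k) - q * p₀ ≤
        riskAdj K α 1 (fun k => (q₀ - d k) * π k) - q₀ * p₀) :
    p₀ = (1 / K) * ∑ k, π k := by
  have hslope : ∀ q : ℝ, 0 ≤ q →
      ((1 / K) * ∑ k, π k - p₀) * q ≤ ((1 / K) * ∑ k, π k - p₀) * q₀ := by
    intro q hq
    have := hload q hq
    rw [riskAdj_one, riskAdj_one, mean_sub_mul_eq, mean_sub_mul_eq] at this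
    linarith
  linarith [eq_zero_of_forall_nonneg_mul_le_mul hq₀ hslope]

/-- If the load is risk neutral (`λd = 1`), any competitive equilibrium with `q⁰ > 0`
has contract price equal to the average spot price. -/
theorem risk_neutral_load_price_eq_average_spot (K : ℕ) (hK : 1 ≤ K)
    (α : ℝ) (hα0 : 0 ≤ α) (hα1 : α < 1)
    (lamg : ℝ) (hlamg : 0 ≤ lamg ∧ lamg ≤ 1)
    (g d π : Fin K → ℝ) (p₀ q₀ : ℝ) (hq₀ : 0 < q₀)
    (hgen : ∀ q : ℝ, 0 ≤ q →
      riskAdj K α lamg (fun k => (g k - q) * π k) + q * p₀ ≤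
        riskAdj K α lamg (fun k => (g k - q₀) * π k) + q₀ * p₀)
    (hload : ∀ q : ℝ, 0 ≤ q →
      riskAdj K α 1 (fun k => (q - d k) * π k) - q * p₀ ≤
        riskAdj K α 1 (fun k => (q₀ - d k) * π k) - q₀ * p₀) :
    p₀ = (1 / K) * ∑ k, π k :=
  risk_neutral_load_price_eq_average_spot_general K α d π p₀ q₀ hq₀ hload
end

section
/- Multi-agent version, equilibrium implies welfare maximum: let there be J sellers with outputs g j : Fin K → ℝ and risk parameters λ j ∈ [0,1], and I buyers with loads d i : Fin K → ℝ and risk parameters μ i ∈ [0,1]. Suppose p⁰ ∈ ℝ and nonnegative contract quantities (q_s⁰ : Fin J → ℝ, q_b⁰ : Fin I → ℝ) satisfy: each q_s⁰ j maximizes ρ_{λ j}(fun k => (g j k − q)·π k) + q·p⁰ over q ≥ 0, each q_b⁰ i maximizes ρ_{μ i}(fun k => (q − d i k)·π k) − q·p⁰ over q ≥ 0, and the market clears: ∑_{i} q_b⁰ i = ∑_{j} q_s⁰ j. Then (q_s⁰, q_b⁰) maximizes the total welfare ∑_{j} ρ_{λ j}(fun k => (g j k − q_s j)·π k) + ∑_{i}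 ρ_{μ i}(fun k => (q_b i − d i k)·π k) over all q_s ≥ 0, q_b ≥ 0 satisfying ∑_{i} q_b i = ∑_{j} q_s j. -/
/-! Summing the sellers' and buyers' optimality inequalities at the common price `p⁰`, the
payments `(∑ q) * p⁰` enter with opposite signs and cancel, since both profiles clear the
market. -/

open Finset

theorem welfare_le_of_price_taking_optimal {ι κ : Type*} [Fintype ι] [Fintype κ]
    (S : ι → ℝ → ℝ) (B : κ → ℝ → ℝ) (p : ℝ) (qs₀ qs : ι → ℝ) (qb₀ qb : κ → ℝ)
    (hsell : ∀ j, S j (qs j) + qs j * p ≤ S j (qs₀ j) + qs₀ j * p)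
    (hbuy : ∀ i, B i (qb i) - qb i * p ≤ B i (qb₀ i) - qb₀ i * p)
    (hclear₀ : ∑ i, qb₀ i = ∑ j, qs₀ j) (hclear : ∑ i, qb i = ∑ j, qs j) :
    ∑ j, S j (qs j) + ∑ i, B i (qb i) ≤ ∑ j, S j (qs₀ j) + ∑ i, B i (qb₀ i) := by
  have sellers := sum_le_sum fun j (_ : j ∈ univ) => hsell j
  have buyers := sum_le_sum fun i (_ : i ∈ univ) => hbuy i
  simp only [sum_add_distrib, sum_sub_distrib, ← sum_mul, hclear₀, hclear] at sellers buyers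
  linarith

theorem multiagent_equilibrium_maximizes_welfare_general (K J I : ℕ)
    (α : ℝ)
    (lam : Fin J → ℝ)
    (mu : Fin I → ℝ)
    (g : Fin J → Fin K → ℝ) (d : Fin I → Fin K → ℝ) (π : Fin K → ℝ)
    (p₀ : ℝ) (qs₀ : Fin J → ℝ) (qb₀ : Fin I → ℝ)
    (hsell : ∀ j, ∀ q : ℝ, 0 ≤ q →
      riskAdj K α (lam j) (fun k => (g j k - q) * π k) + q * p₀ ≤
        riskAdj K α (lam j) (fun k => (g j k - qs₀ j) * π k) + qs₀ j * p₀)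
    (hbuy : ∀ i, ∀ q : ℝ, 0 ≤ q →
      riskAdj K α (mu i) (fun k => (q - d i k) * π k) - q * p₀ ≤
        riskAdj K α (mu i) (fun k => (qb₀ i - d i k) * π k) - qb₀ i * p₀)
    (hclear : ∑ i, qb₀ i = ∑ j, qs₀ j) :
    ∀ (qs : Fin J → ℝ) (qb : Fin I → ℝ),
      (∀ j, 0 ≤ qs j) → (∀ i, 0 ≤ qb i) → (∑ i, qb i = ∑ j, qs j) →
      (∑ j, riskAdj K α (lam j) (fun k => (g j k - qs j) * π k)) +
          (∑ i, riskAdj K α (mu i) (fun k => (qb i - d i k) * π k)) ≤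
        (∑ j, riskAdj K α (lam j) (fun k => (g j k - qs₀ j) * π k)) +
          (∑ i, riskAdj K α (mu i) (fun k => (qb₀ i - d i k) * π k)) :=
  fun qs qb hqs hqb hcl =>
    welfare_le_of_price_taking_optimal
      (fun j q => riskAdj K α (lam j) (fun k => (g j k - q) * π k))
      (fun i q => riskAdj K α (mu i) (fun k => (q - d i k) * π k))
      p₀ qs₀ qs qb₀ qb (fun j => hsell j _ (hqs j)) (fun i => hbuy i _ (hqb i)) hclear hcl

/-- Multi-agent version, equilibrium implies welfare maximum: if at a single price `p⁰`
every seller's and every buyer's contract quantity is individually optimal and the market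
clears (`∑ᵢ q_b i = ∑ⱼ q_s j`), then the quantity profile maximizes total welfare over all
nonnegative, market-clearing profiles. -/
theorem multiagent_equilibrium_maximizes_welfare (K J I : ℕ) (hK : 1 ≤ K)
    (α : ℝ) (hα0 : 0 ≤ α) (hα1 : α < 1)
    (lam : Fin J → ℝ) (hlam : ∀ j, 0 ≤ lam j ∧ lam j ≤ 1)
    (mu : Fin I → ℝ) (hmu : ∀ i, 0 ≤ mu i ∧ mu i ≤ 1)
    (g : Fin J → Fin K → ℝ) (d : Fin I → Fin K → ℝ) (π : Fin K → ℝ)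
    (p₀ : ℝ) (qs₀ : Fin J → ℝ) (qb₀ : Fin I → ℝ)
    (hqs₀ : ∀ j, 0 ≤ qs₀ j) (hqb₀ : ∀ i, 0 ≤ qb₀ i)
    (hsell : ∀ j, ∀ q : ℝ, 0 ≤ q →
      riskAdj K α (lam j) (fun k => (g j k - q) * π k) + q * p₀ ≤
        riskAdj K α (lam j) (fun k => (g j k - qs₀ j) * π k) + qs₀ j * p₀)
    (hbuy : ∀ i, ∀ q : ℝ, 0 ≤ q →
      riskAdj K α (mu i) (fun k => (q - d i k) * π k) - q * p₀ ≤
        riskAdj K α (mu i) (fun k => (qb₀ i - d i k) * π k) - qb₀ i * p₀)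
    (hclear : ∑ i, qb₀ i = ∑ j, qs₀ j) :
    ∀ (qs : Fin J → ℝ) (qb : Fin I → ℝ),
      (∀ j, 0 ≤ qs j) → (∀ i, 0 ≤ qb i) → (∑ i, qb i = ∑ j, qs j) →
      (∑ j, riskAdj K α (lam j) (fun k => (g j k - qs j) * π k)) +
          (∑ i, riskAdj K α (mu i) (fun k => (qb i - d i k) * π k)) ≤
        (∑ j, riskAdj K α (lam j) (fun k => (g j k - qs₀ j) * π k)) +
          (∑ i, riskAdj K α (mu i) (fun k => (qb₀ i - d i k) * π k)) :=
  multiagent_equilibrium_maximizes_welfare_general K J I α lam mu g d π p₀ qs₀ qb₀ hsell hbuy hclear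
end

section
/- Strong duality for the generator's contracting problem: fix g, π : Fin K → ℝ, λ ∈ [0,1], α ∈ [0,1), p ∈ ℝ, and let Θ = { θ : Fin K → ℝ | ∑_{k} θ k = 1 and λ/K ≤ θ k ≤ λ/K + (1−λ)/(K·(1−α)) for all k }. If there exists θ ∈ Θ with ∑_{k} θ k · π k ≥ p, then sup_{q ≥ 0} [ ρ_λ(fun k => (g k − q)·π k) + q·p ] = min { ∑_{k} θ k · π k · g k | θ ∈ Θ, ∑_{k} θ k · π k ≥ p }, and the minimum on the right-hand side is attained. If no θ ∈ Θ satisfies ∑_{k} θ k · π k ≥ p, then the supremum on the left-hand side is +∞. -/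
open Finset

/-!
For `K` equally likely scenarios, `CVaR_α(x)` is the minimum of `∑ θ_k x_k` over the weights
`0 ≤ θ_k ≤ 1/(K(1-α))` summing to `1`, attained by the greedy weights that load the smallest
outcomes first; so `ρ_λ(x) = min_{θ ∈ Θ} ∑ θ_k x_k`, attained at one of finitely many vertices of
`Θ`, one for each sorting permutation. The generator's objective at `q` is therefore the minimum
over `Θ` of the Lagrangian `∑ θ_k π_k g_k + q (p - ∑ θ_k π_k)`, and weak duality is immediate.
For the converse a multiplier `q ≥ 0` is built from the vertices alone: a vertex with
`∑ θ_k π_k < p` bounds `q` from below, one with `∑ θ_k π_k > p` from above, and every lower bound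
lies below every upper bound because the segment joining the two vertices meets the feasible
set, where the objective is at least its minimum `V`. When the feasible set is empty there are
no upper bounds, so the objective is unbounded.
-/

-- The increments of `s ↦ min 1 (s * c)`; for `c = 1 / (K * (1 - α))` these are the weights that
-- `CVaR K α` puts on the outcomes of `K` scenarios sorted increasingly.
noncomputable def cvarWeight (c : ℝ) (j : ℕ) : ℝ :=
  min 1 ((j + 1) * c) - min 1 (j * c)

section CVaRWeight

variable {c : ℝ}

lemma cvarWeight_nonneg (hc : 0 ≤ c) (j : ℕ) : 0 ≤ cvarWeight c j :=
  sub_nonneg.2 <| min_le_min_left _ <| by nlinarith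

lemma cvarWeight_le (hc : 0 ≤ c) (j : ℕ) : cvarWeight c j ≤ c := by
  have : min 1 ((j + 1) * c) ≤ min 1 (j * c) + c :=
    calc min 1 ((j + 1) * c) ≤ min (1 + c) (j * c + c) := min_le_min (by linarith) (by linarith)
      _ = min 1 (j * c) + c := min_add_add_right _ _ _
  unfold cvarWeight
  linarith

lemma sum_cvarWeight {n : ℕ} (hnc : 1 ≤ n * c) : ∑ j : Fin n, cvarWeight c j = 1 := by
  have := sum_range_sub (fun j : ℕ => min 1 ((j : ℝ) * c)) n
  push_cast at this
  rw [Fin.sum_univ_eq_sum_range (cvarWeight c)]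
  simp [cvarWeight, this, min_eq_left hnc]

lemma cvarWeight_of_succ_mul_le (hc : 0 ≤ c) {j : ℕ} (h : (j + 1) * c ≤ 1) :
    cvarWeight c j = c := by
  rw [cvarWeight, min_eq_right h, min_eq_right (by nlinarith)]
  ring

lemma cvarWeight_of_one_le_mul (hc : 0 ≤ c) {j : ℕ} (h : 1 ≤ j * c) : cvarWeight c j = 0 := by
  rw [cvarWeight, min_eq_left h, min_eq_left (by nlinarith), sub_self]

lemma exists_fin_mul_lt_one_le_succ_mul {n : ℕ} (hc : 0 < c) (hnc : 1 ≤ n * c) :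
    ∃ m : Fin n, (m : ℝ) * c < 1 ∧ 1 ≤ ((m : ℝ) + 1) * c := by
  have hceil_pos : 1 ≤ ⌈c⁻¹⌉₊ := Nat.one_le_ceil_iff.2 (inv_pos.2 hc)
  have hceil_le : ⌈c⁻¹⌉₊ ≤ n := Nat.ceil_le.2 ((inv_le_iff_one_le_mul₀ hc).2 (by linarith))
  have hm : ((⌈c⁻¹⌉₊ - 1 : ℕ) : ℝ) = ⌈c⁻¹⌉₊ - 1 := by push_cast [Nat.cast_sub hceil_pos]; ring
  refine ⟨⟨⌈c⁻¹⌉₊ - 1, by omega⟩, ?_, ?_⟩ <;> simp only [hm]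
  · have := Nat.ceil_lt_add_one (inv_pos.2 hc).le
    have : (⌈c⁻¹⌉₊ - 1 : ℝ) < c⁻¹ := by linarith
    calc (⌈c⁻¹⌉₊ - 1 : ℝ) * c < c⁻¹ * c := mul_lt_mul_of_pos_right this hc
      _ = 1 := inv_mul_cancel₀ hc.ne'
  · calc 1 = c⁻¹ * c := (inv_mul_cancel₀ hc.ne').symm
      _ ≤ _ := by gcongr; simpa using Nat.le_ceil c⁻¹

end CVaRWeight

lemma mul_min_le_mul {d u t : ℝ} (hu : 0 ≤ u) (hud : u ≤ d) : d * min t 0 ≤ u * t := by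
  rcases le_total t 0 with ht | ht
  · rw [min_eq_left ht]; nlinarith
  · rw [min_eq_right ht, mul_zero]; positivity

lemma sum_mul_add_mul_sum_min_le {ι : Type*} [Fintype ι] {u : ι → ℝ} {d : ℝ}
    (hu : ∀ k, 0 ≤ u k ∧ u k ≤ d) (x : ι → ℝ) (a : ℝ) :
    (∑ k, u k) * a + d * ∑ k, min (x k - a) 0 ≤ ∑ k, u k * x k := by
  have : d * ∑ k, min (x k - a) 0 ≤ ∑ k, u k * (x k - a) := by
    rw [mul_sum]
    exact sum_le_sum fun k _ => mul_min_le_mul (hu k).1 (hu k).2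
  simp only [mul_sub, sum_sub_distrib, ← sum_mul] at this
  linarith

section SortedWeights

variable {K : ℕ} {c : ℝ}

lemma cvarWeight_mul_sub_eq {y : Fin K → ℝ} (hy : Monotone y) (hc : 0 ≤ c) {m : Fin K}
    (hm : (m : ℝ) * c < 1 ∧ 1 ≤ ((m : ℝ) + 1) * c) (j : Fin K) :
    cvarWeight c j * (y j - y m) = c * min (y j - y m) 0 := by
  rcases lt_trichotomy j m with hjm | rfl | hmj
  · have hjm' : (j : ℝ) + 1 ≤ m := by exact_mod_cast Fin.lt_def.1 hjm
    rw [cvarWeight_of_succ_mul_le hc (by nlinarith), min_eq_left (by linarith [hy hjm.le])]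
  · simp
  · have hmj' : (m : ℝ) + 1 ≤ j := by exact_mod_cast Fin.lt_def.1 hmj
    rw [cvarWeight_of_one_le_mul hc (by nlinarith), min_eq_right (by linarith [hy hmj.le])]
    simp

lemma isGreatest_cvarWeight_sort (hc : 0 < c) (hKc : 1 ≤ K * c) (x : Fin K → ℝ) :
    IsGreatest {v : ℝ | ∃ a : ℝ, v = a + c * ∑ k, min (x k - a) 0}
      (∑ k, cvarWeight c ((Tuple.sort x).symm k) * x k) := by
  set σ := Tuple.sort x
  refine ⟨?_, ?_⟩
  · obtain ⟨m, hm⟩ := exists_fin_mul_lt_one_le_succ_mul hc hKc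
    have hσ := cvarWeight_mul_sub_eq (Tuple.monotone_sort x) hc.le hm
    refine ⟨x (σ m), ?_⟩
    calc ∑ k, cvarWeight c (σ.symm k) * x k = ∑ j : Fin K, cvarWeight c j * x (σ j) :=
          (Equiv.sum_comp σ fun k => cvarWeight c (σ.symm k) * x k).symm.trans (by simp)
      _ = x (σ m) + ∑ j : Fin K, cvarWeight c j * (x (σ j) - x (σ m)) := by
          simp only [mul_sub, sum_sub_distrib, ← sum_mul, sum_cvarWeight hKc]
          ring
      _ = x (σ m) + c * ∑ k, min (x k - x (σ m)) 0 := by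
          simp only [Function.comp_apply] at hσ
          rw [mul_sum, ← Equiv.sum_comp σ fun k => c * min (x k - x (σ m)) 0]
          exact congrArg _ (sum_congr rfl fun j _ => hσ j)
  · rintro v ⟨a, rfl⟩
    have hw k : 0 ≤ cvarWeight c (σ.symm k) ∧ cvarWeight c (σ.symm k) ≤ c :=
      ⟨cvarWeight_nonneg hc.le _, cvarWeight_le hc.le _⟩
    simpa [Equiv.sum_comp σ.symm (fun j : Fin K => cvarWeight c j), sum_cvarWeight hKc]
      using sum_mul_add_mul_sum_min_le hw x a

end SortedWeights

section RiskEnvelope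

variable {K : ℕ} {α lam : ℝ}

lemma cvar_coeff_pos (hK : 1 ≤ K) (hα1 : α < 1) : 0 < 1 / ((K : ℝ) * (1 - α)) := by
  have : (1 : ℝ) ≤ K := by exact_mod_cast hK
  have : 0 < 1 - α := by linarith
  positivity

lemma one_le_mul_cvar_coeff (hK : 1 ≤ K) (hα0 : 0 ≤ α) (hα1 : α < 1) :
    1 ≤ (K : ℝ) * (1 / (K * (1 - α))) := by
  have : (0 : ℝ) < K := by exact_mod_cast hK
  rw [mul_one_div, le_div_iff₀ (by nlinarith)]
  nlinarith

lemma CVaR_eq_sum_cvarWeight_sort (hK : 1 ≤ K) (hα0 : 0 ≤ α) (hα1 : α < 1) (x : Fin K → ℝ) :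
    CVaR K α x = ∑ k, cvarWeight (1 / (K * (1 - α))) ((Tuple.sort x).symm k) * x k :=
  (isGreatest_cvarWeight_sort (cvar_coeff_pos hK hα1) (one_le_mul_cvar_coeff hK hα0 hα1) x).csSup_eq

lemma isGreatest_cvar (hK : 1 ≤ K) (hα0 : 0 ≤ α) (hα1 : α < 1) (x : Fin K → ℝ) :
    IsGreatest {v : ℝ | ∃ a : ℝ, v = a + (1 / (K * (1 - α))) * ∑ k, min (x k - a) 0}
      (CVaR K α x) := by
  rw [CVaR_eq_sum_cvarWeight_sort hK hα0 hα1]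
  exact isGreatest_cvarWeight_sort (cvar_coeff_pos hK hα1) (one_le_mul_cvar_coeff hK hα0 hα1) x

noncomputable def envelopeVertex (K : ℕ) (α lam : ℝ) (σ : Equiv.Perm (Fin K)) (k : Fin K) : ℝ :=
  lam / K + (1 - lam) * cvarWeight (1 / (K * (1 - α))) (σ.symm k)

-- The set `Θ` of the paper.
def riskEnvelope (K : ℕ) (α lam : ℝ) : Set (Fin K → ℝ) :=
  {θ | (∑ k, θ k) = 1 ∧ ∀ k, lam / K ≤ θ k ∧ θ k ≤ lam / K + (1 - lam) / (K * (1 - α))}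

lemma convex_riskEnvelope (K : ℕ) (α lam : ℝ) : Convex ℝ (riskEnvelope K α lam) := by
  rintro θ ⟨hθ₁, hθ⟩ θ' ⟨hθ'₁, hθ'⟩ a b ha hb hab
  refine ⟨by simp [sum_add_distrib, ← mul_sum, hθ₁, hθ'₁, hab], fun k => ?_⟩
  obtain rfl : b = 1 - a := by linarith
  simp only [Pi.add_apply, Pi.smul_apply, smul_eq_mul]
  constructor <;> nlinarith [hθ k, hθ' k]

lemma isCompact_riskEnvelope (K : ℕ) (α lam : ℝ) : IsCompact (riskEnvelope K α lam) := by
  refine (isCompact_Icc (a := fun _ => lam / K)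
    (b := fun _ => lam / K + (1 - lam) / (K * (1 - α)))).of_isClosed_subset ?_
    fun θ hθ => ⟨fun k => (hθ.2 k).1, fun k => (hθ.2 k).2⟩
  simp only [riskEnvelope, Set.ofPred_and, Set.ofPred_forall]
  exact (isClosed_eq (by fun_prop) continuous_const).inter <| isClosed_iInter fun k =>
    (isClosed_le continuous_const (continuous_apply k)).inter
      (isClosed_le (continuous_apply k) continuous_const)

lemma envelopeVertex_mem (hK : 1 ≤ K) (hα0 : 0 ≤ α) (hα1 : α < 1) (hlam1 : lam ≤ 1)
    (σ : Equiv.Perm (Fin K)) : envelopeVertex K α lam σ ∈ riskEnvelope K α lam := by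
  have hc := cvar_coeff_pos hK hα1
  have hK0 : (K : ℝ) ≠ 0 := by positivity
  refine ⟨?_, fun k => ?_⟩
  · simp only [envelopeVertex, sum_add_distrib, ← mul_sum, sum_const, card_univ,
      Fintype.card_fin, nsmul_eq_mul]
    rw [Equiv.sum_comp σ.symm (fun j : Fin K => cvarWeight _ j),
      sum_cvarWeight (one_le_mul_cvar_coeff hK hα0 hα1)]
    field_simp
    ring
  · have h0 := cvarWeight_nonneg hc.le (σ.symm k)
    have h1 := cvarWeight_le hc.le (σ.symm k)
    rw [← mul_one_div (1 - lam)]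
    exact ⟨le_add_of_nonneg_right (by nlinarith), by unfold envelopeVertex; nlinarith⟩

lemma riskAdj_eq_sum_envelopeVertex (hK : 1 ≤ K) (hα0 : 0 ≤ α) (hα1 : α < 1) (x : Fin K → ℝ) :
    riskAdj K α lam x = ∑ k, envelopeVertex K α lam (Tuple.sort x) k * x k := by
  simp only [riskAdj, CVaR_eq_sum_cvarWeight_sort hK hα0 hα1, envelopeVertex, add_mul,
    sum_add_distrib, ← mul_sum, mul_assoc]
  ring

lemma riskAdj_le_sum_mul (hK : 1 ≤ K) (hα0 : 0 ≤ α) (hα1 : α < 1) {θ : Fin K → ℝ}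
    (hθ : θ ∈ riskEnvelope K α lam) (x : Fin K → ℝ) : riskAdj K α lam x ≤ ∑ k, θ k * x k := by
  obtain ⟨a, ha⟩ := (isGreatest_cvar hK hα0 hα1 x).1
  have hK0 : (K : ℝ) ≠ 0 := by positivity
  have hu k : 0 ≤ θ k - lam / K ∧ θ k - lam / K ≤ (1 - lam) / (K * (1 - α)) := by
    constructor <;> linarith [hθ.2 k]
  have := sum_mul_add_mul_sum_min_le hu x a
  simp only [sub_mul, sum_sub_distrib, ← mul_sum, sum_const, card_univ, Fintype.card_fin,
    nsmul_eq_mul, hθ.1] at this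
  rw [mul_div_cancel₀ _ hK0, ← mul_one_div (1 - lam)] at this
  rw [riskAdj, ha]
  linear_combination this

end RiskEnvelope

lemma exists_nonneg_forall_le_add_mul {ι : Type*} [Finite ι] {A B : ι → ℝ} {V : ℝ}
    (h : ∀ i j (μ : ℝ), 0 ≤ μ → μ ≤ 1 → μ * B i + (1 - μ) * B j ≤ 0 →
      V ≤ μ * A i + (1 - μ) * A j) :
    ∃ q, 0 ≤ q ∧ ∀ i, V ≤ A i + q * B i := by
  have hnonpos j (hj : B j ≤ 0) : V ≤ A j := by simpa using h j j 1 zero_le_one le_rfl (by simpa)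
  -- the multiplier forced by a constraint with `B i > 0` also satisfies those with `B j ≤ 0`,
  -- as seen on the point of the segment from `i` to `j` where `B` vanishes
  have hcross i j (hi : 0 < B i) (hj : B j ≤ 0) : V ≤ A j + (V - A i) / B i * B j := by
    have hd : 0 < B i - B j := by linarith
    have hμ : -B j / (B i - B j) * (B i - B j) = -B j := div_mul_cancel₀ _ hd.ne'
    have hr : (V - A i) / B i * B i = V - A i := div_mul_cancel₀ _ hi.ne'
    have hV := h i j (-B j / (B i - B j)) (div_nonneg (by linarith) hd.le)
      ((div_le_one hd).2 (by linarith)) (by linear_combination hμ)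
    have key : B i * (A j + (V - A i) / B i * B j - V)
        = (B i - B j) * (-B j / (B i - B j) * A i + (1 - -B j / (B i - B j)) * A j - V) := by
      linear_combination (A j - A i) * hμ + B j * hr
    have := key ▸ mul_nonneg hd.le (sub_nonneg.2 hV)
    linarith [(mul_nonneg_iff_of_pos_left hi).1 this]
  by_cases hpos : ∃ i, 0 < B i
  · have : Nonempty {i // 0 < B i} := let ⟨i, hi⟩ := hpos; ⟨⟨i, hi⟩⟩
    obtain ⟨⟨i₀, hi₀⟩, hmax⟩ := Finite.exists_max fun i : {i // 0 < B i} => (V - A i) / B i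
    refine ⟨max ((V - A i₀) / B i₀) 0, le_max_right _ _, fun j => ?_⟩
    rcases lt_or_ge 0 (B j) with hj | hj
    · have := (div_le_iff₀ hj).1 ((hmax ⟨j, hj⟩).trans (le_max_left _ (0 : ℝ)))
      linarith
    · rcases le_total ((V - A i₀) / B i₀) 0 with h₀ | h₀
      · simpa [max_eq_right h₀] using hnonpos j hj
      · simpa [max_eq_left h₀] using hcross i₀ j hi₀ hj
  · push Not at hpos
    exact ⟨0, le_rfl, fun j => by simpa using hnonpos j (hpos j)⟩

lemma exists_lagrangeMultiplier {E ι : Type*} [AddCommGroup E] [Module ℝ E] [Finite ι]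
    {Θ : Set E} (hΘ : Convex ℝ Θ) {v : ι → E} (hv : ∀ i, v i ∈ Θ) (f h : E →ₗ[ℝ] ℝ)
    {p V : ℝ} (hV : ∀ θ ∈ Θ, p ≤ h θ → V ≤ f θ) :
    ∃ q, 0 ≤ q ∧ ∀ i, V ≤ f (v i) + q * (p - h (v i)) := by
  refine exists_nonneg_forall_le_add_mul fun i j μ hμ0 hμ1 hμ => ?_
  have hmem := hΘ (hv i) (hv j) hμ0 (sub_nonneg.2 hμ1) (add_sub_cancel μ 1)
  have := hV _ hmem (by simp only [map_add, map_smul, smul_eq_mul]; linarith)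
  simpa only [map_add, map_smul, smul_eq_mul] using this

-- The objective of the generator's contracting problem (11) at contract volume `q`.
noncomputable def generatorObjective (K : ℕ) (α lam : ℝ) (g π : Fin K → ℝ) (p q : ℝ) : ℝ :=
  riskAdj K α lam (fun k => (g k - q) * π k) + q * p

section Generator

variable {K : ℕ} {α lam : ℝ} (g π : Fin K → ℝ) (p : ℝ)

lemma sum_mul_sub_mul_add_mul (θ : Fin K → ℝ) (q : ℝ) :
    ∑ k, θ k * ((g k - q) * π k) + q * p = ∑ k, θ k * π k * g k + q * (p - ∑ k, θ k * π k) := by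
  have hk k : θ k * ((g k - q) * π k) = θ k * π k * g k - q * (θ k * π k) := by ring
  simp only [hk, sum_sub_distrib, ← mul_sum]
  ring

lemma generatorObjective_le (hK : 1 ≤ K) (hα0 : 0 ≤ α) (hα1 : α < 1) {θ : Fin K → ℝ}
    (hθ : θ ∈ riskEnvelope K α lam) (hp : p ≤ ∑ k, θ k * π k) {q : ℝ} (hq : 0 ≤ q) :
    generatorObjective K α lam g π p q ≤ ∑ k, θ k * π k * g k := by
  have := riskAdj_le_sum_mul hK hα0 hα1 hθ fun k => (g k - q) * π k
  rw [generatorObjective]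
  nlinarith [sum_mul_sub_mul_add_mul g π p θ q]

lemma exists_le_generatorObjective (hK : 1 ≤ K) (hα0 : 0 ≤ α) (hα1 : α < 1) (hlam1 : lam ≤ 1)
    {V : ℝ} (hV : ∀ θ ∈ riskEnvelope K α lam, p ≤ ∑ k, θ k * π k → V ≤ ∑ k, θ k * π k * g k) :
    ∃ q, 0 ≤ q ∧ V ≤ generatorObjective K α lam g π p q := by
  have hf θ : Fintype.linearCombination ℝ (π * g) θ = ∑ k, θ k * π k * g k := by
    simp [Fintype.linearCombination_apply, mul_assoc]
  have hh θ : Fintype.linearCombination ℝ π θ = ∑ k, θ k * π k := by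
    simp [Fintype.linearCombination_apply]
  obtain ⟨q, hq, hVq⟩ := exists_lagrangeMultiplier (convex_riskEnvelope K α lam)
    (envelopeVertex_mem hK hα0 hα1 hlam1) _ _ (p := p) fun θ hθ hp => by
      rw [hf]; exact hV θ hθ (by rwa [hh] at hp)
  refine ⟨q, hq, ?_⟩
  rw [generatorObjective, riskAdj_eq_sum_envelopeVertex hK hα0 hα1, sum_mul_sub_mul_add_mul]
  simpa only [hf, hh] using hVq (Tuple.sort _)

end Generator

theorem generator_strong_duality_general (K : ℕ) (hK : 1 ≤ K)
    (α : ℝ) (hα0 : 0 ≤ α) (hα1 : α < 1)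
    (lam : ℝ) (hlam1 : lam ≤ 1)
    (g π : Fin K → ℝ) (p : ℝ) :
    ((∃ θ : Fin K → ℝ, (∑ k, θ k) = 1 ∧
        (∀ k, lam / K ≤ θ k ∧ θ k ≤ lam / K + (1 - lam) / (K * (1 - α))) ∧
        p ≤ ∑ k, θ k * π k) →
      ∃ V : ℝ,
        IsLeast
          {v : ℝ | ∃ θ : Fin K → ℝ, (∑ k, θ k) = 1 ∧
            (∀ k, lam / K ≤ θ k ∧ θ k ≤ lam / K + (1 - lam) / (K * (1 - α))) ∧
            p ≤ (∑ k, θ k * π k) ∧ v = ∑ k, θ k * π k * g k} V ∧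
        IsLUB
          {v : ℝ | ∃ q : ℝ, 0 ≤ q ∧
            v = riskAdj K α lam (fun k => (g k - q) * π k) + q * p} V) ∧
    ((¬ ∃ θ : Fin K → ℝ, (∑ k, θ k) = 1 ∧
        (∀ k, lam / K ≤ θ k ∧ θ k ≤ lam / K + (1 - lam) / (K * (1 - α))) ∧
        p ≤ ∑ k, θ k * π k) →
      ¬ BddAbove
        {v : ℝ | ∃ q : ℝ, 0 ≤ q ∧
          v = riskAdj K α lam (fun k => (g k - q) * π k) + q * p}) := by
  constructor
  · rintro ⟨θ₀, hθ₀₁, hθ₀, hp₀⟩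
    have hclosed : IsClosed {θ : Fin K → ℝ | p ≤ ∑ k, θ k * π k} :=
      isClosed_le continuous_const (by fun_prop)
    have hfeas := (isCompact_riskEnvelope K α lam).inter_right hclosed
    obtain ⟨θ, ⟨hθ, hpθ⟩, hmin⟩ := hfeas.exists_isMinOn ⟨θ₀, ⟨hθ₀₁, hθ₀⟩, hp₀⟩
      (by fun_prop : Continuous fun θ : Fin K → ℝ => ∑ k, θ k * π k * g k).continuousOn
    refine ⟨_, ⟨⟨θ, hθ.1, hθ.2, hpθ, rfl⟩, ?_⟩, ?_, fun U hU => ?_⟩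
    · rintro v ⟨θ', hθ'₁, hθ', hp', rfl⟩
      exact hmin ⟨⟨hθ'₁, hθ'⟩, hp'⟩
    · rintro v ⟨q, hq, rfl⟩
      exact generatorObjective_le g π p hK hα0 hα1 hθ hpθ hq
    · obtain ⟨q, hq, hle⟩ := exists_le_generatorObjective g π p hK hα0 hα1 hlam1
        fun θ' hθ' hp' => hmin ⟨hθ', hp'⟩
      exact hle.trans (hU ⟨q, hq, rfl⟩)
  · rintro hinfeasible ⟨U, hU⟩
    obtain ⟨q, hq, hle⟩ := exists_le_generatorObjective g π p hK hα0 hα1 hlam1 (V := U + 1)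
      fun θ hθ hp => absurd ⟨θ, hθ.1, hθ.2, hp⟩ hinfeasible
    linarith [hle.trans (hU ⟨q, hq, rfl⟩)]

/-- Strong duality for the generator's contracting problem (primal-dual equality (24)):
if the dual feasible set `{θ ∈ Θ | ∑ₖ θ k · π k ≥ p}` is nonempty, the supremum of the
generator's objective over `q ≥ 0` equals the attained minimum of `∑ₖ θ k · π k · g k`
over it; otherwise the generator's objective is unbounded above. -/
theorem generator_strong_duality (K : ℕ) (hK : 1 ≤ K)
    (α : ℝ) (hα0 : 0 ≤ α) (hα1 : α < 1)
    (lam : ℝ) (hlam0 : 0 ≤ lam) (hlam1 : lam ≤ 1)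
    (g π : Fin K → ℝ) (p : ℝ) :
    ((∃ θ : Fin K → ℝ, (∑ k, θ k) = 1 ∧
        (∀ k, lam / K ≤ θ k ∧ θ k ≤ lam / K + (1 - lam) / (K * (1 - α))) ∧
        p ≤ ∑ k, θ k * π k) →
      ∃ V : ℝ,
        IsLeast
          {v : ℝ | ∃ θ : Fin K → ℝ, (∑ k, θ k) = 1 ∧
            (∀ k, lam / K ≤ θ k ∧ θ k ≤ lam / K + (1 - lam) / (K * (1 - α))) ∧
            p ≤ (∑ k, θ k * π k) ∧ v = ∑ k, θ k * π k * g k} V ∧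
        IsLUB
          {v : ℝ | ∃ q : ℝ, 0 ≤ q ∧
            v = riskAdj K α lam (fun k => (g k - q) * π k) + q * p} V) ∧
    ((¬ ∃ θ : Fin K → ℝ, (∑ k, θ k) = 1 ∧
        (∀ k, lam / K ≤ θ k ∧ θ k ≤ lam / K + (1 - lam) / (K * (1 - α))) ∧
        p ≤ ∑ k, θ k * π k) →
      ¬ BddAbove
        {v : ℝ | ∃ q : ℝ, 0 ≤ q ∧
          v = riskAdj K α lam (fun k => (g k - q) * π k) + q * p}) :=
  generator_strong_duality_general K hK α hα0 hα1 lam hlam1 g π p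
end
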